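/- Under the perturbed ODE system r·dP/dr = -P·Q + E₁ and r·dQ/dr = Q·(P² - 1 - Q + E₂), where |E₁(r)|, |E₂(r)| ≤ δ·r^{1/2}, with initial data η^{-1} ≤ P(r₀) ≤ η and 0 ≤ Q(r₀) ≤ 1, if δ is sufficiently small depending only on η then for all r ∈ [r_b, r₀]: (4η)^{-1} ≤ P(r) ≤ 4η and Q(r) ≤ 16η². -/

import Mathlib

open Set Topology

/-!
`F = Q / P + P + P⁻¹` is a first integral of the unperturbed system. Along the perturbed one,
as long as `F ≤ B` (so that `Q / P`, `P⁻¹ ≤ B`), one has `|r F'| ≤ C(B) δ √r`, and since `r^{-1/2}`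
is integrable at `0`, `F` can grow by at most `2 C δ` on the way down from `r₀`. Starting from
`F(r₀) ≤ 3η`, a continuity argument downward from `r₀` with `B = 4η` keeps `F ≤ 3η + 1/2 < 4η`
on all of `[r_b, r₀]`, and `P⁻¹, P ≤ F`, `Q ≤ (Q / P) P ≤ F²` give the bounds.
-/

-- Conserved when `E₁ = E₂ = 0`.
noncomputable def bounceIntegral (P Q : ℝ → ℝ) (r : ℝ) : ℝ := Q r / P r + P r + (P r)⁻¹

-- `r F'(r)` along the perturbed system.
noncomputable def bounceIntegralDefect (P Q E₁ E₂ : ℝ → ℝ) (r : ℝ) : ℝ :=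
  Q r * E₂ r / P r + E₁ r * (P r ^ 2 - 1 - Q r) / P r ^ 2

structure PerturbedBounceSystem (P Q E₁ E₂ : ℝ → ℝ) (δ : ℝ) (s : Set ℝ) : Prop where
  differentiableAt_P : ∀ r ∈ s, DifferentiableAt ℝ P r
  differentiableAt_Q : ∀ r ∈ s, DifferentiableAt ℝ Q r
  nonneg_Q : ∀ r ∈ s, 0 ≤ Q r
  ode_P : ∀ r ∈ s, r * deriv P r = -(P r) * Q r + E₁ r
  ode_Q : ∀ r ∈ s, r * deriv Q r = Q r * ((P r)^2 - 1 - Q r + E₂ r)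
  abs_E₁_le : ∀ r ∈ s, |E₁ r| ≤ δ * √r
  abs_E₂_le : ∀ r ∈ s, |E₂ r| ≤ δ * √r

lemma div_add_add_inv_le_three_mul {p q η : ℝ} (hη : 0 < η) (hpl : η⁻¹ ≤ p) (hpu : p ≤ η)
    (hq : q ≤ 1) : q / p + p + p⁻¹ ≤ 3 * η := by
  have hp : 0 < p := (inv_pos.2 hη).trans_le hpl
  have hinv : p⁻¹ ≤ η := inv_le_of_inv_le₀ hη hpl
  have hqp : q / p ≤ p⁻¹ := by
    rw [div_eq_mul_inv]; exact mul_le_of_le_one_left (inv_pos.2 hp).le hq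
  linarith

lemma le_of_div_add_add_inv_le {p q K : ℝ} (hp : 0 < p) (hq : 0 ≤ q)
    (h : q / p + p + p⁻¹ ≤ K) : q / p ≤ K ∧ p ≤ K ∧ p⁻¹ ≤ K := by
  have : 0 ≤ q / p := div_nonneg hq hp.le
  have : 0 < p⁻¹ := inv_pos.2 hp
  refine ⟨?_, ?_, ?_⟩ <;> linarith

lemma bounds_of_div_add_add_inv_le {p q K : ℝ} (hp : 0 < p) (hq : 0 ≤ q)
    (h : q / p + p + p⁻¹ ≤ K) : K⁻¹ ≤ p ∧ p ≤ K ∧ q ≤ K ^ 2 := by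
  obtain ⟨hqp, hpK, hinv⟩ := le_of_div_add_add_inv_le hp hq h
  refine ⟨inv_le_of_inv_le₀ hp hinv, hpK, ?_⟩
  calc q = q / p * p := (div_mul_cancel₀ q hp.ne').symm
    _ ≤ K * K := mul_le_mul hqp hpK hp.le ((inv_pos.2 hp).le.trans hinv)
    _ = K ^ 2 := (sq K).symm

lemma abs_perturbation_le {p q e₁ e₂ B M : ℝ} (hp : 0 < p) (hq : 0 ≤ q)
    (hqp : q / p ≤ B) (hinv : p⁻¹ ≤ B) (he₁ : |e₁| ≤ M) (he₂ : |e₂| ≤ M) :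
    |q * e₂ / p + e₁ * (p ^ 2 - 1 - q) / p ^ 2| ≤ (B + 1 + 2 * B ^ 2) * M := by
  set u := q / p
  set v := p⁻¹
  have hu : 0 ≤ u := div_nonneg hq hp.le
  have hv : 0 ≤ v := inv_nonneg.2 hp.le
  have hexpand :
      q * e₂ / p + e₁ * (p ^ 2 - 1 - q) / p ^ 2 = u * e₂ + e₁ * (1 - v ^ 2 - u * v) := by
    simp only [u, v]; field_simp
  have hw : |1 - v ^ 2 - u * v| ≤ 1 + 2 * B ^ 2 := by
    rw [abs_le]; constructor <;> nlinarith [mul_le_mul hqp hinv hv (hu.trans hqp)]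
  rw [hexpand]
  calc |u * e₂ + e₁ * (1 - v ^ 2 - u * v)| ≤ u * |e₂| + |e₁| * |1 - v ^ 2 - u * v| := by
        grw [abs_add_le, abs_mul, abs_mul, abs_of_nonneg hu]
    _ ≤ B * M + M * (1 + 2 * B ^ 2) := by
        have hM : 0 ≤ M := (abs_nonneg _).trans he₁
        have hB : 0 ≤ B := hu.trans hqp
        gcongr
    _ = (B + 1 + 2 * B ^ 2) * M := by ring

theorem IsClosed.Icc_subset_of_forall_mem_nhdsLT_of_Icc_subset {α : Type*}
    [ConditionallyCompleteLinearOrder α] [TopologicalSpace α] [OrderTopology α]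
    [DenselyOrdered α] {a b : α} {s : Set α} (hs : IsClosed (s ∩ Icc a b)) (hb : b ∈ s)
    (h : ∀ t ∈ Ioc a b, Icc t b ⊆ s → s ∈ 𝓝[<] t) : Icc a b ⊆ s := by
  have hs' : IsClosed (OrderDual.ofDual ⁻¹' (s ∩ Icc a b)) := hs
  rw [preimage_inter, ← Icc_toDual] at hs'
  intro x hx
  exact hs'.Icc_subset_of_forall_mem_nhdsGT_of_Icc_subset hb
    (fun t ht hsub ↦ h t ⟨ht.2, ht.1⟩ fun u hu ↦ hsub ⟨hu.2, hu.1⟩) ⟨hx.2, hx.1⟩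

lemma isClosed_setOf_le_and_bounceIntegral_le_inter_Icc {P Q : ℝ → ℝ} {a b c B : ℝ}
    (hc : 0 < c) (hP : ContinuousOn P (Icc a b)) (hQ : ContinuousOn Q (Icc a b)) :
    IsClosed ({t | c ≤ P t ∧ bounceIntegral P Q t ≤ B} ∩ Icc a b) := by
  have hK : IsClosed (Icc a b ∩ P ⁻¹' Ici c) :=
    hP.preimage_isClosed_of_isClosed isClosed_Icc isClosed_Ici
  have hF : ContinuousOn (bounceIntegral P Q) (Icc a b ∩ P ⁻¹' Ici c) := by
    have hP' : ContinuousOn P (Icc a b ∩ P ⁻¹' Ici c) := hP.mono inter_subset_left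
    have hne : ∀ t ∈ Icc a b ∩ P ⁻¹' Ici c, P t ≠ 0 := fun t ht ↦ (hc.trans_le ht.2).ne'
    exact (((hQ.mono inter_subset_left).div hP' hne).add hP').add (hP'.inv₀ hne)
  convert hF.preimage_isClosed_of_isClosed hK isClosed_Iic using 1
  ext t
  simp only [mem_inter_iff, mem_ofPred_eq, mem_preimage, mem_Ici, mem_Iic]
  tauto

lemma monotoneOn_Icc_of_hasDerivAt_nonneg {f f' : ℝ → ℝ} {a b : ℝ}
    (hf : ∀ x ∈ Icc a b, HasDerivAt f (f' x) x) (hf' : ∀ x ∈ Icc a b, 0 ≤ f' x) :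
    MonotoneOn f (Icc a b) :=
  monotoneOn_of_hasDerivWithinAt_nonneg (convex_Icc a b)
    (fun x hx ↦ (hf x hx).continuousAt.continuousWithinAt)
    (fun x hx ↦ (hf x (interior_subset hx)).hasDerivWithinAt)
    (fun x hx ↦ hf' x (interior_subset hx))

namespace PerturbedBounceSystem

variable {P Q E₁ E₂ : ℝ → ℝ} {δ : ℝ}

lemma mono {s t : Set ℝ} (h : PerturbedBounceSystem P Q E₁ E₂ δ s) (hts : t ⊆ s) :
    PerturbedBounceSystem P Q E₁ E₂ δ t :=
  ⟨fun r hr ↦ h.differentiableAt_P r (hts hr), fun r hr ↦ h.differentiableAt_Q r (hts hr),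
    fun r hr ↦ h.nonneg_Q r (hts hr), fun r hr ↦ h.ode_P r (hts hr),
    fun r hr ↦ h.ode_Q r (hts hr), fun r hr ↦ h.abs_E₁_le r (hts hr),
    fun r hr ↦ h.abs_E₂_le r (hts hr)⟩

lemma hasDerivAt_bounceIntegral {s : Set ℝ} (h : PerturbedBounceSystem P Q E₁ E₂ δ s) {t : ℝ}
    (hts : t ∈ s) (ht : 0 < t) (hPt : P t ≠ 0) :
    HasDerivAt (bounceIntegral P Q) (bounceIntegralDefect P Q E₁ E₂ t / t) t := by
  have hP := (h.differentiableAt_P t hts).hasDerivAt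
  have hQ := (h.differentiableAt_Q t hts).hasDerivAt
  refine (((hQ.div hP hPt).add hP).add (hP.inv hPt)).congr_deriv ?_
  have hdP : deriv P t = (-(P t) * Q t + E₁ t) / t := by
    rw [eq_div_iff ht.ne']; linear_combination h.ode_P t hts
  have hdQ : deriv Q t = Q t * (P t ^ 2 - 1 - Q t + E₂ t) / t := by
    rw [eq_div_iff ht.ne']; linear_combination h.ode_Q t hts
  rw [hdP, hdQ, bounceIntegralDefect]
  field_simp
  ring

lemma bounceIntegral_le {a b B : ℝ} (h : PerturbedBounceSystem P Q E₁ E₂ δ (Icc a b))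
    (ha : 0 < a) (hδ : 0 ≤ δ) (hgood : ∀ t ∈ Icc a b, 0 < P t ∧ bounceIntegral P Q t ≤ B) :
    ∀ t ∈ Icc a b, bounceIntegral P Q t ≤
      bounceIntegral P Q b + 2 * (B + 1 + 2 * B ^ 2) * δ * √b := by
  set C := B + 1 + 2 * B ^ 2
  -- The derivative `C δ / √t` of `2 C δ √t` dominates `|F'|`.
  have hderiv : ∀ t ∈ Icc a b, HasDerivAt (fun t ↦ bounceIntegral P Q t + 2 * C * δ * √t)
      (bounceIntegralDefect P Q E₁ E₂ t / t + 2 * C * δ * (1 / (2 * √t))) t := fun t ht ↦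
    (h.hasDerivAt_bounceIntegral ht (ha.trans_le ht.1) (hgood t ht).1.ne').add
      ((Real.hasDerivAt_sqrt (ha.trans_le ht.1).ne').const_mul _)
  have hnonneg : ∀ t ∈ Icc a b,
      0 ≤ bounceIntegralDefect P Q E₁ E₂ t / t + 2 * C * δ * (1 / (2 * √t)) := by
    intro t ht
    have ht0 : 0 < t := ha.trans_le ht.1
    obtain ⟨hPt, hFt⟩ := hgood t ht
    obtain ⟨hqp, -, hinv⟩ := le_of_div_add_add_inv_le hPt (h.nonneg_Q t ht) hFt
    have hX : |bounceIntegralDefect P Q E₁ E₂ t| ≤ C * (δ * √t) :=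
      abs_perturbation_le hPt (h.nonneg_Q t ht) hqp hinv (h.abs_E₁_le t ht) (h.abs_E₂_le t ht)
    have hsqrt : 0 < √t := Real.sqrt_pos.2 ht0
    have hsum : bounceIntegralDefect P Q E₁ E₂ t / t + 2 * C * δ * (1 / (2 * √t)) =
        (bounceIntegralDefect P Q E₁ E₂ t + C * (δ * √t)) / t := by
      field_simp
      linear_combination (-(C * δ)) * Real.mul_self_sqrt ht0.le
    rw [hsum]
    exact div_nonneg (by linarith [neg_abs_le (bounceIntegralDefect P Q E₁ E₂ t)]) ht0.le
  have hmono := monotoneOn_Icc_of_hasDerivAt_nonneg hderiv hnonneg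
  intro t ht
  have := hmono ht (right_mem_Icc.2 (ht.1.trans ht.2)) ht.2
  have hC : 0 ≤ C := by nlinarith [sq_nonneg (B + 1 / 4)]
  have : 0 ≤ 2 * C * δ * √t := by positivity
  linarith

lemma pos_and_bounceIntegral_le {a b B : ℝ} (h : PerturbedBounceSystem P Q E₁ E₂ δ (Icc a b))
    (ha : 0 < a) (hab : a ≤ b) (hδ : 0 ≤ δ) (hPb : 0 < P b)
    (hB : bounceIntegral P Q b + 2 * (B + 1 + 2 * B ^ 2) * δ * √b < B) :
    ∀ t ∈ Icc a b, 0 < P t ∧ bounceIntegral P Q t ≤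
      bounceIntegral P Q b + 2 * (B + 1 + 2 * B ^ 2) * δ * √b := by
  set M := bounceIntegral P Q b + 2 * (B + 1 + 2 * B ^ 2) * δ * √b
  set S := {t | B⁻¹ ≤ P t ∧ bounceIntegral P Q t ≤ B}
  have hstrict : ∀ t ∈ Icc a b, 0 < P t → bounceIntegral P Q t ≤ M →
      B⁻¹ < P t ∧ bounceIntegral P Q t < B := by
    intro t ht hPt hFt
    obtain ⟨hinv, hPF, -⟩ := bounds_of_div_add_add_inv_le hPt (h.nonneg_Q t ht)
      (le_refl (bounceIntegral P Q t))
    have hFB := hFt.trans_lt hB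
    exact ⟨(inv_strictAnti₀ (hPt.trans_le hPF) hFB).trans_le hinv, hFB⟩
  have hb : b ∈ Icc a b := right_mem_Icc.2 hab
  have hbS : B⁻¹ < P b ∧ bounceIntegral P Q b < B := by
    refine hstrict b hb hPb (le_add_of_nonneg_right ?_)
    have : 0 ≤ B + 1 + 2 * B ^ 2 := by nlinarith [sq_nonneg (B + 1 / 4)]
    positivity
  have hBinv : 0 < B⁻¹ := inv_pos.2 <| hPb.trans_le
    ((bounds_of_div_add_add_inv_le hPb (h.nonneg_Q b hb) le_rfl).2.1) |>.trans hbS.2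
  have hgood : ∀ t ∈ Icc a b, Icc t b ⊆ S → 0 < P t ∧ bounceIntegral P Q t ≤ M := by
    intro t ht hsub
    have hpos : ∀ u ∈ Icc t b, 0 < P u ∧ bounceIntegral P Q u ≤ B :=
      fun u hu ↦ ⟨hBinv.trans_le (hsub hu).1, (hsub hu).2⟩
    have htb : t ∈ Icc t b := left_mem_Icc.2 ht.2
    exact ⟨(hpos t htb).1, (h.mono (Icc_subset_Icc_left ht.1)).bounceIntegral_le
      (ha.trans_le ht.1) hδ hpos t htb⟩
  have hS : Icc a b ⊆ S := by
    refine IsClosed.Icc_subset_of_forall_mem_nhdsLT_of_Icc_subset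
      (isClosed_setOf_le_and_bounceIntegral_le_inter_Icc hBinv
        (fun t ht ↦ (h.differentiableAt_P t ht).continuousAt.continuousWithinAt)
        (fun t ht ↦ (h.differentiableAt_Q t ht).continuousAt.continuousWithinAt))
      ⟨hbS.1.le, hbS.2.le⟩ fun t ht hsub ↦ ?_
    have htI : t ∈ Icc a b := Ioc_subset_Icc_self ht
    obtain ⟨hPt, hFt⟩ := hgood t htI hsub
    obtain ⟨hlow, hup⟩ := hstrict t htI hPt hFt
    have hPc := (h.differentiableAt_P t htI).continuousAt
    have hFc := (h.hasDerivAt_bounceIntegral htI (ha.trans ht.1) hPt.ne').continuousAt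
    exact mem_nhdsWithin_of_mem_nhds <|
      ((continuousAt_const.eventually_lt hPc hlow).and
        (hFc.eventually_lt continuousAt_const hup)).mono fun u hu ↦ ⟨hu.1.le, hu.2.le⟩
  exact fun t ht ↦ hgood t ht fun u hu ↦ hS ⟨ht.1.trans hu.1, hu.2⟩

end PerturbedBounceSystem

/-- For the perturbed bounce ODE system with errors |Eᵢ(r)| ≤ δ·√r and
data η⁻¹ ≤ P(r₀) ≤ η, 0 ≤ Q(r₀) ≤ 1, if δ is small enough depending only on η, then
(4η)⁻¹ ≤ P ≤ 4η and Q ≤ 16η² on [r_b, r₀]. -/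
theorem stmt_2 (η : ℝ) (hη : 2 < η) :
    ∃ δ₀ : ℝ, 0 < δ₀ ∧
      ∀ (r_b r₀ δ : ℝ) (P Q E₁ E₂ : ℝ → ℝ),
        0 < r_b → r_b < r₀ → r₀ ≤ 1 → 0 < δ → δ ≤ δ₀ →
        (∀ r ∈ Set.Icc r_b r₀, DifferentiableAt ℝ P r) →
        (∀ r ∈ Set.Icc r_b r₀, DifferentiableAt ℝ Q r) →
        (∀ r ∈ Set.Icc r_b r₀, 0 ≤ P r) →
        (∀ r ∈ Set.Icc r_b r₀, 0 ≤ Q r) →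
        (∀ r ∈ Set.Icc r_b r₀, r * deriv P r = -(P r) * Q r + E₁ r) →
        (∀ r ∈ Set.Icc r_b r₀, r * deriv Q r = Q r * ((P r)^2 - 1 - Q r + E₂ r)) →
        (∀ r ∈ Set.Icc r_b r₀, |E₁ r| ≤ δ * Real.sqrt r) →
        (∀ r ∈ Set.Icc r_b r₀, |E₂ r| ≤ δ * Real.sqrt r) →
        η⁻¹ ≤ P r₀ → P r₀ ≤ η → Q r₀ ≤ 1 →
        ∀ r ∈ Set.Icc r_b r₀, (4*η)⁻¹ ≤ P r ∧ P r ≤ 4*η ∧ Q r ≤ 16*η^2 := by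
  have hη0 : 0 < η := by linarith
  set C := 4 * η + 1 + 2 * (4 * η) ^ 2
  refine ⟨1 / (4 * C), by positivity, ?_⟩
  intro r_b r₀ δ P Q E₁ E₂ hrb hr₀ hr₀1 hδ hδ₀ hPd hQd _ hQ hPode hQode hE₁ hE₂ hPl hPu hQ₀
  have hsys : PerturbedBounceSystem P Q E₁ E₂ δ (Icc r_b r₀) :=
    ⟨hPd, hQd, hQ, hPode, hQode, hE₁, hE₂⟩
  have hF₀ : bounceIntegral P Q r₀ ≤ 3 * η := div_add_add_inv_le_three_mul hη0 hPl hPu hQ₀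
  have hpert : 2 * C * δ * √r₀ ≤ 1 / 2 := by
    have hsqrt : √r₀ ≤ 1 := Real.sqrt_le_one.2 hr₀1
    have : 2 * C * δ ≤ 1 / 2 := by
      rw [le_div_iff₀ (by positivity)] at hδ₀; linarith
    nlinarith [Real.sqrt_nonneg r₀]
  intro r hr
  obtain ⟨hPr, hFr⟩ := hsys.pos_and_bounceIntegral_le (B := 4 * η) hrb hr₀.le hδ.le
    ((inv_pos.2 hη0).trans_le hPl) (by linarith) r hr
  obtain ⟨hlow, hup, hQr⟩ := bounds_of_div_add_add_inv_le hPr (hQ r hr)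
    (show bounceIntegral P Q r ≤ 4 * η by linarith)
  exact ⟨hlow, hup, by linarith⟩
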